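/- For a code ensemble with M codewords drawn according to a joint distribution P_{X(1)...X(M)} such that every subset of codewords of equal size has the same marginal distribution (exchangeability), under maximum likelihood decoding over a channel P_{Y|X}, the ensemble-average error probability ε satisfies ε ≤ E[min{1, (M−1)·Pr[i(X̄;Y) ≥ i(X;Y) | X,Y]}], where (X, X̄) are distributed as the first two codewords and Y is the channel output given X. -/

import Mathlib

/-!
Under ML decoding, message `j` can be missed on output `y` only if some other codeword is at least
as likely as `c j`, so its miss probability is at most `min 1 N`, where `N` counts these
competitors. Exchangeability makes the ensemble law invariant under permuting the messages, so the
averaged bound is the same for every `j` and may be evaluated at message `0`. Given `c 0 = a`,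
`E[min 1 N] ≤ min 1 E[N]`, and since every pair `(c 0, c k)` with `k ≠ 0` is distributed as the
first two codewords, `E[N]` is `M - 1` times the `P2`-probability that `W a y ≤ W b y`. Where
`P1 a * W a y > 0` the output law `PY y` is positive, so that event implies `i(a; y) ≤ i(b; y)`.
-/

open scoped BigOperators Classical

noncomputable section

/-- The set of ML-optimal messages for codebook `c` and channel output `y`. -/
def mlSet {A Y : Type*} {M : ℕ} (W : A → Y → ℝ) (c : Fin M → A) (y : Y) :
    Finset (Fin M) :=
  Finset.univ.filter (fun j => ∀ k, W (c k) y ≤ W (c j) y)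

/-- Average error probability of codebook `c` over channel `W` under maximum
likelihood decoding, with ties broken uniformly at random. -/
def mlError {A Y : Type*} [Fintype Y] {M : ℕ} (W : A → Y → ℝ) (c : Fin M → A) : ℝ :=
  (M : ℝ)⁻¹ * ∑ j : Fin M, ∑ y : Y,
    W (c j) y * (1 - if j ∈ mlSet W c y then ((mlSet W c y).card : ℝ)⁻¹ else 0)

open Finset

theorem mul_min_le_mul_mul_min_one_mul_div {p w m r R : ℝ} (hp : 0 ≤ p) (hw : 0 ≤ w)
    (hm : 0 ≤ m) (hr : 0 ≤ r) (hrR : 0 < p → 0 < w → r ≤ R) :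
    w * min p (m * r) ≤ p * w * min 1 (m * (R / p)) := by
  rcases hw.eq_or_lt with rfl | hw
  · simp
  rcases hp.eq_or_lt with rfl | hp
  · simp [mul_nonneg hm hr]
  have hpR : p * (m * (R / p)) = m * R := by field_simp
  rw [mul_comm p, mul_assoc, mul_min_of_nonneg _ _ hp.le, mul_one, hpR]
  gcongr
  exact hrR hp hw

theorem sum_filter_le_le_sum_filter_log_div_le {X : Type*} [Fintype X] {f : X → ℝ}
    (hf : ∀ b, 0 ≤ f b) {w : X → ℝ} {a : X} (ha : 0 < w a) {t : ℝ} (ht : 0 < t) :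
    ∑ b with w a ≤ w b, f b ≤ ∑ b with Real.log (w a / t) ≤ Real.log (w b / t), f b :=
  sum_le_sum_of_subset_of_nonneg (monotone_filter_right _ fun _ _ hb =>
      Real.log_le_log (div_pos ha ht) (div_le_div_of_nonneg_right hb ht.le))
    fun b _ _ => hf b

section Competitors

variable {ι X Y : Type*} [Fintype ι] [DecidableEq ι]

def numCompetitors (W : X → Y → ℝ) (c : ι → X) (j : ι) (y : Y) : ℕ :=
  #{k | k ≠ j ∧ W (c j) y ≤ W (c k) y}

def unionBoundError [Fintype Y] (W : X → Y → ℝ) (c : ι → X) (j : ι) : ℝ :=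
  ∑ y, W (c j) y * min 1 (numCompetitors W c j y : ℝ)

theorem numCompetitors_comp_perm (W : X → Y → ℝ) (c : ι → X) (σ : Equiv.Perm ι) (j : ι)
    (y : Y) : numCompetitors W (c ∘ σ) j y = numCompetitors W c (σ j) y :=
  card_equiv σ fun k => by simp

theorem unionBoundError_comp_perm [Fintype Y] (W : X → Y → ℝ) (c : ι → X) (σ : Equiv.Perm ι)
    (j : ι) : unionBoundError W (c ∘ σ) j = unionBoundError W c (σ j) := by
  simp only [unionBoundError, numCompetitors_comp_perm, Function.comp_apply]

theorem sum_comp_perm [Fintype X] {R : Type*} [AddCommMonoid R] (σ : Equiv.Perm ι)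
    (F : (ι → X) → R) : ∑ c, F (c ∘ σ) = ∑ c, F c :=
  Fintype.sum_equiv (σ.symm.arrowCongr (Equiv.refl X)) _ _ fun _ => rfl

theorem sum_mul_unionBoundError_eq [Fintype X] [Fintype Y] (W : X → Y → ℝ)
    {P : (ι → X) → ℝ} (hP : ∀ (σ : Equiv.Perm ι) c, P (c ∘ σ) = P c) (j j' : ι) :
    ∑ c, P c * unionBoundError W c j = ∑ c, P c * unionBoundError W c j' := by
  rw [← sum_comp_perm (Equiv.swap j j')]
  simp only [hP, unionBoundError_comp_perm, Equiv.swap_apply_left]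

theorem sum_mul_card_filter_eq [Fintype X] (P : (ι → X) → ℝ) (s : Finset (ι → X)) (q : X → ℝ)
    {j : ι} (hq : ∀ k ≠ j, ∀ b, ∑ c ∈ s with c k = b, P c = q b) (p : X → Prop)
    [DecidablePred p] :
    ∑ c ∈ s, P c * #{k | k ≠ j ∧ p (c k)} = (Fintype.card ι - 1 : ℝ) * ∑ b with p b, q b := by
  calc ∑ c ∈ s, P c * #{k | k ≠ j ∧ p (c k)}
      = ∑ k with k ≠ j, ∑ c ∈ s, if p (c k) then P c else 0 := by
        simp_rw [natCast_card_filter, mul_sum, sum_filter]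
        rw [sum_comm]
        refine sum_congr rfl fun k _ => ?_
        by_cases hk : k = j <;> simp [hk]
    _ = ∑ k with k ≠ j, ∑ b with p b, q b := by
        refine sum_congr rfl fun k hk => ?_
        rw [← sum_fiberwise s (· k), sum_filter]
        refine sum_congr rfl fun b _ => ?_
        rw [← hq k (mem_filter.1 hk).2 b, ← sum_filter]
        split_ifs with hb
        · exact sum_congr (by ext; simp_all) fun _ _ => rfl
        · exact sum_eq_zero fun c hc => by
            simp only [mem_filter] at hc
            exact absurd (hc.1.2 ▸ hc.2) hb
    _ = _ := by
        rw [sum_const, filter_ne', card_erase_of_mem (mem_univ j), card_univ, nsmul_eq_mul,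
          Nat.cast_sub (Fintype.card_pos_iff.2 ⟨j⟩), Nat.cast_one]

theorem sum_filter_eq_sum_of_pair_marginal [Fintype X] {P : (ι → X) → ℝ} {j k : ι} {a : X}
    {q : X → ℝ} (hq : ∀ b, ∑ c with c j = a ∧ c k = b, P c = q b) :
    ∑ c with c j = a, P c = ∑ b, q b := by
  rw [← sum_fiberwise _ (· k)]
  simp_rw [filter_filter, hq]

theorem sum_mul_unionBoundError_eq_sum_fiber [Fintype X] [Fintype Y] (W : X → Y → ℝ)
    (P : (ι → X) → ℝ) (j : ι) :
    ∑ c, P c * unionBoundError W c j =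
      ∑ a, ∑ y, W a y * ∑ c with c j = a, P c * min 1 (numCompetitors W c j y : ℝ) := by
  rw [← sum_fiberwise univ (· j)]
  refine sum_congr rfl fun a _ => ?_
  simp_rw [unionBoundError, mul_sum]
  rw [sum_comm]
  refine sum_congr rfl fun y _ => sum_congr rfl fun c hc => ?_
  rw [(mem_filter.1 hc).2]
  ring

theorem sum_mul_min_one_numCompetitors_le [Fintype X] (W : X → Y → ℝ) {P : (ι → X) → ℝ}
    (hP0 : ∀ c, 0 ≤ P c) {q : X → ℝ} {j : ι} {a : X}
    (hq : ∀ k ≠ j, ∀ b, ∑ c with c j = a ∧ c k = b, P c = q b) (y : Y) :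
    ∑ c with c j = a, P c * min 1 (numCompetitors W c j y : ℝ) ≤
      min (∑ c with c j = a, P c) ((Fintype.card ι - 1 : ℝ) * ∑ b with W a y ≤ W b y, q b) := by
  refine le_min (sum_le_sum fun c _ => mul_le_of_le_one_right (hP0 c) (min_le_left _ _)) ?_
  calc ∑ c with c j = a, P c * min 1 (numCompetitors W c j y : ℝ)
      ≤ ∑ c with c j = a, P c * #{k | k ≠ j ∧ W a y ≤ W (c k) y} :=
        sum_le_sum fun c hc => by
          obtain rfl := (mem_filter.1 hc).2
          exact mul_le_mul_of_nonneg_left (min_le_right _ _) (hP0 c)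
    _ = _ := sum_mul_card_filter_eq P _ q (fun k hk b => by rw [filter_filter]; exact hq k hk b)
          fun b => W a y ≤ W b y

end Competitors

section MLDecoding

variable {X Y : Type*} {M : ℕ}

theorem one_sub_ml_hit_le_min_one_numCompetitors (W : X → Y → ℝ) (c : Fin M → X) (j : Fin M)
    (y : Y) :
    1 - (if j ∈ mlSet W c y then ((mlSet W c y).card : ℝ)⁻¹ else 0) ≤
      min 1 (numCompetitors W c j y : ℝ) := by
  split_ifs with hj
  · set S := mlSet W c y
    -- every other ML-optimal message is a competitor of `j`
    have hcard : #S ≤ numCompetitors W c j y + 1 := by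
      rw [← card_erase_add_one hj]
      refine Nat.add_le_add_right (card_le_card fun k hk => ?_) 1
      simp only [S, mlSet, mem_erase, mem_filter, mem_univ, true_and] at hk hj ⊢
      exact ⟨hk.1, hk.2 j⟩
    have hcard' : (#S : ℝ) ≤ numCompetitors W c j y + 1 := by exact_mod_cast hcard
    have hS : (1 : ℝ) ≤ #S := by exact_mod_cast card_pos.2 ⟨j, hj⟩
    have hinv : (#S : ℝ)⁻¹ ≤ 1 := inv_le_one_of_one_le₀ hS
    refine le_min (by linarith [inv_nonneg.2 (zero_le_one.trans hS)]) ?_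
    nlinarith [mul_inv_cancel₀ (zero_lt_one.trans_le hS).ne',
      mul_nonneg (sub_nonneg.2 hS) (sub_nonneg.2 hinv)]
  · obtain ⟨k, hk⟩ : ∃ k, W (c j) y < W (c k) y := by simpa [mlSet] using hj
    have hkj : k ≠ j := by rintro rfl; exact hk.false
    have hN : 1 ≤ numCompetitors W c j y := card_pos.2 ⟨k, by simp [hkj, hk.le]⟩
    simpa using (Nat.one_le_cast (α := ℝ)).2 hN

theorem mlError_le_average_unionBoundError [Fintype Y] {W : X → Y → ℝ} (hW0 : ∀ x y, 0 ≤ W x y)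
    (c : Fin M → X) : mlError W c ≤ (M : ℝ)⁻¹ * ∑ j, unionBoundError W c j := by
  unfold mlError unionBoundError
  gcongr with j _ y _
  · exact hW0 _ _
  · exact one_sub_ml_hit_le_min_one_numCompetitors W c j y

theorem sum_mul_mlError_le [Fintype X] [Fintype Y] {W : X → Y → ℝ} (hW0 : ∀ x y, 0 ≤ W x y)
    {P : (Fin M → X) → ℝ} (hP0 : ∀ c, 0 ≤ P c) (hP : ∀ (σ : Equiv.Perm (Fin M)) c, P (c ∘ σ) = P c)
    (j : Fin M) : ∑ c, P c * mlError W c ≤ ∑ c, P c * unionBoundError W c j := by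
  have hM : (M : ℝ) ≠ 0 := by have := j.pos; positivity
  calc ∑ c, P c * mlError W c
      ≤ ∑ c, P c * ((M : ℝ)⁻¹ * ∑ j, unionBoundError W c j) := by
        gcongr with c _
        exacts [hP0 c, mlError_le_average_unionBoundError hW0 c]
    _ = (M : ℝ)⁻¹ * ∑ j', ∑ c, P c * unionBoundError W c j' := by
        simp_rw [mul_sum, mul_left_comm (P _)]; rw [sum_comm]
    _ = ∑ c, P c * unionBoundError W c j := by
        simp_rw [sum_mul_unionBoundError_eq W hP _ j]
        rw [sum_const, card_univ, Fintype.card_fin, nsmul_eq_mul, inv_mul_cancel_left₀ hM]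

end MLDecoding

section Exchangeable

variable {M : ℕ} {X : Type*} [Fintype X]

def IsExchangeable (P : (Fin M → X) → ℝ) : Prop :=
  ∀ (k : ℕ) (σ τ : Fin k → Fin M), Function.Injective σ → Function.Injective τ →
    ∀ v : Fin k → X, ∑ c with ∀ i, c (σ i) = v i, P c = ∑ c with ∀ i, c (τ i) = v i, P c

theorem IsExchangeable.comp_perm {P : (Fin M → X) → ℝ} (hP : IsExchangeable P)
    (σ : Equiv.Perm (Fin M)) (c : Fin M → X) : P (c ∘ σ) = P c := by
  have h := hP M σ (Equiv.refl _) σ.injective (Equiv.refl _).injective (c ∘ σ)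
  have hσ : ∀ d : Fin M → X, (∀ i, d (σ i) = c (σ i)) ↔ d = c := fun d =>
    σ.surjective.forall.symm.trans funext_iff.symm
  simp only [Function.comp_apply, hσ, Equiv.refl_apply] at h
  simp only [← funext_iff] at h
  simpa [sum_filter, Function.comp_def] using h.symm

theorem IsExchangeable.sum_filter_pair_eq {P : (Fin M → X) → ℝ} (hP : IsExchangeable P)
    {j k j' k' : Fin M} (hjk : j ≠ k) (hjk' : j' ≠ k') (a b : X) :
    ∑ c with c j = a ∧ c k = b, P c = ∑ c with c j' = a ∧ c k' = b, P c := by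
  simpa [Fin.forall_fin_two] using hP 2 ![j, k] ![j', k'] (injective_pair_iff_ne.2 hjk)
    (injective_pair_iff_ne.2 hjk') ![a, b]

end Exchangeable

/-- **RCU bound for exchangeable (possibly dependent) codeword ensembles.**
If the `M` codewords are drawn from a joint distribution `Pcb` in which every
subset of codewords of equal size has the same marginal, then the
ensemble-average ML error probability `ε` satisfies
`ε ≤ E[min{1, (M−1)·Pr[i(X̄;Y) ≥ i(X;Y) | X,Y]}]`, where `(X,X̄)` are
distributed as the first two codewords and `Y` is the output given `X`. -/
theorem rcu_bound_exchangeable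
    {X Y : Type*} [Fintype X] [Fintype Y]
    (M : ℕ) (hM : 2 ≤ M)
    (W : X → Y → ℝ) (hW0 : ∀ x y, 0 ≤ W x y)
    (Pcb : (Fin M → X) → ℝ) (hPcb0 : ∀ c, 0 ≤ Pcb c)
    (hexch : ∀ (k : ℕ) (σ τ : Fin k → Fin M),
      Function.Injective σ → Function.Injective τ → ∀ v : Fin k → X,
        (∑ c ∈ Finset.univ.filter (fun c : Fin M → X => ∀ i, c (σ i) = v i), Pcb c) =
        (∑ c ∈ Finset.univ.filter (fun c : Fin M → X => ∀ i, c (τ i) = v i), Pcb c))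
    (P2 : X → X → ℝ)
    (hP2 : ∀ a b, P2 a b =
      ∑ c ∈ Finset.univ.filter
        (fun c : Fin M → X => c ⟨0, by omega⟩ = a ∧ c ⟨1, by omega⟩ = b), Pcb c)
    (P1 : X → ℝ) (hP1 : ∀ a, P1 a = ∑ b, P2 a b)
    (PY : Y → ℝ) (hPY : ∀ y, PY y = ∑ x, P1 x * W x y)
    (info : X → Y → ℝ) (hinfo : ∀ x y, info x y = Real.log (W x y / PY y))
    (ε : ℝ) (hε : ε = ∑ c, Pcb c * mlError W c) :
    ε ≤ ∑ a, ∑ y, P1 a * W a y *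
      min 1 ((M - 1 : ℝ) *
        ((∑ b ∈ Finset.univ.filter (fun b : X => info a y ≤ info b y), P2 a b) /
          P1 a)) := by
  set j0 : Fin M := ⟨0, by omega⟩
  set j1 : Fin M := ⟨1, by omega⟩
  have hex : IsExchangeable Pcb := hexch
  have hj01 : j0 ≠ j1 := by simp [j0, j1, Fin.ext_iff]
  have hpair : ∀ k ≠ j0, ∀ a b, ∑ c with c j0 = a ∧ c k = b, Pcb c = P2 a b := fun k hk a b => by
    rw [hP2, hex.sum_filter_pair_eq hk.symm hj01]
  have hmarg : ∀ a, ∑ c with c j0 = a, Pcb c = P1 a := fun a =>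
    (hP1 a).symm ▸ sum_filter_eq_sum_of_pair_marginal (hpair j1 hj01.symm a)
  have hP1nn : ∀ a, 0 ≤ P1 a := fun a => hmarg a ▸ sum_nonneg fun c _ => hPcb0 c
  have hP2nn : ∀ a b, 0 ≤ P2 a b := fun a b => hP2 a b ▸ sum_nonneg fun c _ => hPcb0 c
  have hPY : ∀ a y, 0 < P1 a → 0 < W a y → 0 < PY y := fun a y ha hw =>
    hPY y ▸ (mul_pos ha hw).trans_le
      (single_le_sum (fun x _ => mul_nonneg (hP1nn x) (hW0 x y)) (mem_univ a))
  have hM1 : (0 : ℝ) ≤ M - 1 := by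
    rw [sub_nonneg]; exact_mod_cast (show 1 ≤ M by omega)
  obtain rfl : info = fun x y => Real.log (W x y / PY y) := funext₂ hinfo
  rw [hε]
  calc ∑ c, Pcb c * mlError W c
      ≤ ∑ c, Pcb c * unionBoundError W c j0 := sum_mul_mlError_le hW0 hPcb0 hex.comp_perm j0
    _ = ∑ a, ∑ y, W a y * ∑ c with c j0 = a, Pcb c * min 1 (numCompetitors W c j0 y : ℝ) :=
        sum_mul_unionBoundError_eq_sum_fiber W Pcb j0
    _ ≤ ∑ a, ∑ y, W a y * min (P1 a) ((M - 1 : ℝ) * ∑ b with W a y ≤ W b y, P2 a b) := by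
        gcongr with a _ y _
        · exact hW0 a y
        · simpa [hmarg] using
            sum_mul_min_one_numCompetitors_le W hPcb0 (fun k hk => hpair k hk a) y
    _ ≤ _ := sum_le_sum fun a _ => sum_le_sum fun y _ =>
        mul_min_le_mul_mul_min_one_mul_div (hP1nn a) (hW0 a y) hM1
          (sum_nonneg fun b _ => hP2nn a b) fun ha hw =>
            sum_filter_le_le_sum_filter_log_div_le (w := (W · y)) (hP2nn a) hw (hPY a y ha hw)
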